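/- Let U ⊆ V and i ∈ V. For every z ∈ [0,∞)^d with recursive max-linear values x on 𝒟, one has x_i = max( max_{k ∈ An_low^U(i)} (b_{ki}/b_{kk}) x_k , max_{j ∈ An_nmw^U(i)} b_{ji} z_j ) (maxima over the empty set are 0). -/

import Mathlib

open scoped NNReal ENNReal Classical

namespace MaxLinearDAG

variable {d : ℕ}

/-- `p` is a directed path (with at least one edge) from `j` to `i` in the edge relation `E`. -/
def PathFrom (E : Fin d → Fin d → Prop) (j i : Fin d) (p : List (Fin d)) : Prop :=
  2 ≤ p.length ∧ p.head? = some j ∧ p.getLast? = some i ∧ List.Chain' E p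

/-- The directed graph given by `E` is acyclic: no directed path from a node to itself. -/
def Acyclic (E : Fin d → Fin d → Prop) : Prop :=
  ∀ i, ¬ ∃ p, PathFrom E i i p

/-- `j` is an ancestor of `i`: there is a path from `j` to `i`. -/
def anc (E : Fin d → Fin d → Prop) (j i : Fin d) : Prop :=
  ∃ p, PathFrom E j i p

/-- The weight of a path `p` starting at `j`: `c j j` times the product of the
edge weights along `p`. -/
noncomputable def pathWeight (c : Fin d → Fin d → ℝ≥0) (j : Fin d) (p : List (Fin d)) : ℝ≥0 :=
  c j j * ((p.zip p.tail).map fun q => c q.1 q.2).prod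

/-- `b` is the max-linear coefficient matrix of the recursive ML model on `(E, c)`:
for `j ∈ an(i)`, `b j i` is the (attained) maximum of the path weights over all paths
from `j` to `i`; `b i i = c i i`; and `b j i = 0` for `j ∉ An(i)`. -/
def IsMLMatrix (E : Fin d → Fin d → Prop) (c b : Fin d → Fin d → ℝ≥0) : Prop :=
  (∀ i, b i i = c i i) ∧
  (∀ j i, j ≠ i → ¬ anc E j i → b j i = 0) ∧
  (∀ j i p, PathFrom E j i p → pathWeight c j p ≤ b j i) ∧
  (∀ j i, anc E j i → ∃ p, PathFrom E j i p ∧ pathWeight c j p = b j i)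

/-- `x` is the vector of recursive max-linear values on `(E, c)` for noise `z`:
`x i = max (max_{k ∈ pa(i)} c k i * x k) (c i i * z i)`, empty max being `0`. -/
def IsRecML (E : Fin d → Fin d → Prop) (c : Fin d → Fin d → ℝ≥0) (z x : Fin d → ℝ≥0) : Prop :=
  ∀ i, x i = (Finset.univ.sup fun k => if E k i then c k i * x k else 0) ⊔ c i i * z i

/-- Max-times matrix product `F ⊙ G`. -/
noncomputable def mprod (F G : Fin d → Fin d → ℝ≥0) : Fin d → Fin d → ℝ≥0 :=
  fun i j => Finset.univ.sup fun k => F i k * G k j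

/-- Max-times matrix power, `mpow A 0` being the identity matrix. -/
noncomputable def mpow (A : Fin d → Fin d → ℝ≥0) : ℕ → Fin d → Fin d → ℝ≥0
  | 0 => fun i j => if i = j then 1 else 0
  | n + 1 => mprod (mpow A n) A

/-- `p` is a max-weighted path from `j` to `i`. -/
def MaxWeighted (E : Fin d → Fin d → Prop) (c b : Fin d → Fin d → ℝ≥0)
    (j i : Fin d) (p : List (Fin d)) : Prop :=
  PathFrom E j i p ∧ pathWeight c j p = b j i

/-- The lowest max-weighted ancestors of `i` in `U`: nodes `j ∈ An(i) ∩ U` such that no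
max-weighted path from `j` to `i` passes through a node of `U \ {j}`. -/
def AnLow (E : Fin d → Fin d → Prop) (c b : Fin d → Fin d → ℝ≥0)
    (U : Set (Fin d)) (i : Fin d) : Set (Fin d) :=
  {j | (anc E j i ∨ j = i) ∧ j ∈ U ∧
    ∀ p, MaxWeighted E c b j i p → ¬ ∃ u ∈ U \ {j}, u ∈ p}

/-- The highest max-weighted descendants of `i` in `U`: nodes `l ∈ De(i) ∩ U` such that no
max-weighted path from `i` to `l` passes through a node of `U \ {l}`. -/
def DeHigh (E : Fin d → Fin d → Prop) (c b : Fin d → Fin d → ℝ≥0)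
    (U : Set (Fin d)) (i : Fin d) : Set (Fin d) :=
  {l | (anc E i l ∨ l = i) ∧ l ∈ U ∧
    ∀ p, MaxWeighted E c b i l p → ¬ ∃ u ∈ U \ {l}, u ∈ p}

/-!
The values satisfy `x i = max_j b j i * z j`, and `b k i / b k k * x k ≤ x i` for all `k`, since
`b k i / b k k` is the edge product of a max-weighted path; this gives `≥`. For `≤`, a term
`b j i * z j` outside the second maximum has `j ∈ U` or a max-weighted path from `j` to `i`
through some `u ∈ U`. Cutting that path at `u` gives `b j i ≤ b u i / b u u * b j u`, so the term
is at most `b u i / b u u * x u`. The same cut moves a node of `U` that is not a lowest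
max-weighted ancestor of `i` to a strict descendant in `U`, so induction along the acyclic
ancestor relation ends in `AnLow E c b U i`.
-/

section Walks

variable {α : Type*}

/-- Unlike `PathFrom`, a walk may be the one-node list `[j]`; its weight `c j j = b j j` then
fits the same inequalities as genuine paths. -/
def IsWalk (E : α → α → Prop) (j i : α) (p : List α) : Prop :=
  p.head? = some j ∧ p.getLast? = some i ∧ p.IsChain E

variable {E : α → α → Prop} {j k u i : α} {p : List α}

lemma isWalk_singleton (E : α → α → Prop) (i : α) : IsWalk E i i [i] :=
  ⟨rfl, rfl, .singleton i⟩

lemma IsWalk.snoc (hp : IsWalk E j k p) (hki : E k i) : IsWalk E j i (p ++ [i]) := by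
  obtain ⟨s, rfl⟩ := List.getLast?_eq_some_iff.mp hp.2.1
  refine ⟨?_, by simp, ?_⟩
  · simpa [List.head?_append] using hp.1
  · simpa [List.append_assoc, hki] using hp.2.2

lemma isWalk_append_cons_iff {s t : List α} :
    IsWalk E j i (s ++ u :: t) ↔ IsWalk E j u (s ++ [u]) ∧ IsWalk E u i (u :: t) := by
  have hhead : (s ++ u :: t).head? = (s ++ [u]).head? := by cases s <;> rfl
  rw [IsWalk, IsWalk, IsWalk, List.isChain_split, hhead, List.getLast?_append_cons]
  simp only [List.getLast?_append, List.getLast?_singleton, Option.some_or, List.head?_cons]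
  tauto

lemma IsWalk.split (hp : IsWalk E j i p) (hu : u ∈ p) :
    ∃ s t, p = s ++ u :: t ∧ IsWalk E j u (s ++ [u]) ∧ IsWalk E u i (u :: t) := by
  obtain ⟨s, t, rfl⟩ := List.mem_iff_append.mp hu
  exact ⟨s, t, rfl, isWalk_append_cons_iff.mp hp⟩

end Walks

section

variable {E : Fin d → Fin d → Prop} {c b : Fin d → Fin d → ℝ≥0}
  {j k u i : Fin d} {p : List (Fin d)}

lemma PathFrom.isWalk (hp : PathFrom E j i p) : IsWalk E j i p := hp.2

lemma IsWalk.eq_singleton_or_pathFrom (hp : IsWalk E j i p) :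
    (p = [j] ∧ j = i) ∨ PathFrom E j i p := by
  match p, hp with
  | [], hp => nomatch hp.1
  | [_], ⟨rfl, rfl, _⟩ => exact .inl ⟨rfl, rfl⟩
  | _ :: _ :: _, hp => exact .inr ⟨by simp, hp⟩

lemma IsWalk.anc_or_eq (hp : IsWalk E j i p) : anc E j i ∨ j = i :=
  hp.eq_singleton_or_pathFrom.symm.imp (⟨p, ·⟩) And.right

lemma anc_of_edge (h : E k i) : anc E k i :=
  ⟨[k, i], by simp, rfl, rfl, List.isChain_pair.mpr h⟩

lemma anc_trans (hjk : anc E j k) (hki : anc E k i) : anc E j i := by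
  obtain ⟨p, hp⟩ := hjk
  obtain ⟨s, rfl⟩ := List.getLast?_eq_some_iff.mp hp.2.2.1
  obtain ⟨q, hq⟩ := hki
  obtain ⟨t, rfl⟩ : ∃ t, q = k :: t := List.head?_eq_some_iff.mp hq.2.1
  refine ⟨s ++ k :: t, ?_, isWalk_append_cons_iff.mpr ⟨hp.isWalk, hq.isWalk⟩⟩
  have := hp.1
  simp only [List.length_append, List.length_cons, List.length_nil] at this ⊢
  omega

lemma Acyclic.wellFounded_anc (hE : Acyclic E) : WellFounded (anc E) :=
  @Finite.wellFounded_of_trans_of_irrefl _ _ _ ⟨fun _ _ _ => anc_trans⟩ ⟨hE⟩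

lemma Acyclic.wellFounded_flip_anc (hE : Acyclic E) : WellFounded (flip (anc E)) :=
  @Finite.wellFounded_of_trans_of_irrefl _ _ _ ⟨fun _ _ _ h h' => anc_trans h' h⟩ ⟨hE⟩

section EdgeProduct

variable {α M : Type*} [Monoid M]

def edgeProd (c : α → α → M) (p : List α) : M :=
  ((p.zip p.tail).map fun q => c q.1 q.2).prod

@[simp] lemma edgeProd_singleton (c : α → α → M) (a : α) : edgeProd c [a] = 1 := rfl

@[simp] lemma edgeProd_cons_cons (c : α → α → M) (a b : α) (l : List α) :
    edgeProd c (a :: b :: l) = c a b * edgeProd c (b :: l) := by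
  simp [edgeProd]

lemma edgeProd_append_cons (c : α → α → M) (s : List α) (u : α) (t : List α) :
    edgeProd c (s ++ u :: t) = edgeProd c (s ++ [u]) * edgeProd c (u :: t) := by
  induction s with
  | nil => simp
  | cons a s ih => cases s <;> simp_all [mul_assoc]

lemma edgeProd_append_singleton (c : α → α → M) {p : List α} {k : α} (hp : p.getLast? = some k)
    (i : α) : edgeProd c (p ++ [i]) = edgeProd c p * c k i := by
  obtain ⟨s, rfl⟩ := List.getLast?_eq_some_iff.mp hp
  rw [List.append_assoc, List.singleton_append, edgeProd_append_cons]
  simp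

end EdgeProduct

lemma pathWeight_eq (c : Fin d → Fin d → ℝ≥0) (j : Fin d) (p : List (Fin d)) :
    pathWeight c j p = c j j * edgeProd c p := rfl

namespace IsMLMatrix

variable (hb : IsMLMatrix E c b)
include hb

lemma pathWeight_le (hp : IsWalk E j i p) : pathWeight c j p ≤ b j i := by
  rcases hp.eq_singleton_or_pathFrom with ⟨rfl, rfl⟩ | hp
  · simp [pathWeight_eq, hb.1]
  · exact hb.2.2.1 j i p hp

lemma exists_isWalk (h : b j i ≠ 0) : ∃ p, IsWalk E j i p ∧ pathWeight c j p = b j i := by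
  by_cases hji : j = i
  · subst hji
    exact ⟨[j], isWalk_singleton E j, by simp [pathWeight_eq, hb.1]⟩
  · have hanc : anc E j i := by_contra fun hn => h (hb.2.1 j i hji hn)
    obtain ⟨p, hp, hpw⟩ := hb.2.2.2 j i hanc
    exact ⟨p, hp.isWalk, hpw⟩

lemma anc_or_eq_of_ne_zero (h : b j i ≠ 0) : anc E j i ∨ j = i := by
  obtain ⟨p, hp, -⟩ := hb.exists_isWalk h
  exact hp.anc_or_eq

lemma mul_le_of_edge (hki : E k i) : b j k * c k i ≤ b j i := by
  by_cases hjk : b j k = 0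
  · simp [hjk]
  obtain ⟨p, hp, hpw⟩ := hb.exists_isWalk hjk
  calc b j k * c k i = pathWeight c j (p ++ [i]) := by
        rw [← hpw, pathWeight_eq, pathWeight_eq, edgeProd_append_singleton c hp.2.1, mul_assoc]
    _ ≤ b j i := hb.pathWeight_le (hp.snoc hki)

lemma le_div_mul_of_mem (hp : MaxWeighted E c b j i p) (hu : u ∈ p) (hcu : c u u ≠ 0) :
    b j i ≤ b u i / b u u * b j u := by
  obtain ⟨s, t, rfl, hs, ht⟩ := hp.1.isWalk.split hu
  have key : b j i * c u u ≤ b j u * b u i :=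
    calc b j i * c u u = pathWeight c j (s ++ [u]) * pathWeight c u (u :: t) := by
          rw [← hp.2, pathWeight_eq, pathWeight_eq, pathWeight_eq, edgeProd_append_cons]
          ring
      _ ≤ b j u * b u i := mul_le_mul' (hb.pathWeight_le hs) (hb.pathWeight_le ht)
  rwa [hb.1 u, div_mul_eq_mul_div, le_div_iff₀ (pos_iff_ne_zero.mpr hcu), mul_comm (b u i)]

end IsMLMatrix

namespace IsRecML

variable {z x : Fin d → ℝ≥0} (hx : IsRecML E c z x)
include hx

lemma noise_le (j : Fin d) : c j j * z j ≤ x j := by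
  rw [hx j]
  exact le_sup_right

lemma edge_le (hki : E k i) : c k i * x k ≤ x i := by
  rw [hx i]
  exact le_sup_of_le_left (Finset.le_sup_of_le (Finset.mem_univ k) (by rw [if_pos hki]))

lemma edgeProd_mul_le (hp : IsWalk E k i p) : edgeProd c p * x k ≤ x i := by
  induction p generalizing k with
  | nil => exact nomatch hp.1
  | cons a t ih =>
    obtain ⟨rfl⟩ : a = k := Option.some_inj.mp hp.1
    cases t with
    | nil =>
      obtain rfl : a = i := by simpa using hp.2.1
      simp
    | cons b t =>
      obtain ⟨hab, hchain⟩ := List.isChain_cons_cons.mp hp.2.2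
      calc edgeProd c (a :: b :: t) * x a = edgeProd c (b :: t) * (c a b * x a) := by
            rw [edgeProd_cons_cons]
            ring
        _ ≤ edgeProd c (b :: t) * x b := by gcongr; exact hx.edge_le hab
        _ ≤ x i := ih ⟨rfl, hp.2.1, hchain⟩

lemma div_mul_le (hb : IsMLMatrix E c b) (k i : Fin d) : b k i / b k k * x k ≤ x i := by
  by_cases hki : b k i = 0
  · simp [hki]
  obtain ⟨p, hp, hpw⟩ := hb.exists_isWalk hki
  have hdiv : b k i / b k k ≤ edgeProd c p := by
    rw [← hpw, pathWeight_eq, hb.1]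
    by_cases hck : c k k = 0
    · simp [hck]
    · rw [mul_div_cancel_left₀ _ hck]
  calc b k i / b k k * x k ≤ edgeProd c p * x k := by gcongr
    _ ≤ x i := hx.edgeProd_mul_le hp

lemma mul_le (hb : IsMLMatrix E c b) (j i : Fin d) : b j i * z j ≤ x i := by
  by_cases hji : b j i = 0
  · simp [hji]
  obtain ⟨p, hp, hpw⟩ := hb.exists_isWalk hji
  calc b j i * z j = edgeProd c p * (c j j * z j) := by
        rw [← hpw, pathWeight_eq]
        ring
    _ ≤ edgeProd c p * x j := by gcongr; exact hx.noise_le j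
    _ ≤ x i := hx.edgeProd_mul_le hp

lemma mul_le_div_mul (hb : IsMLMatrix E c b) (hcj : c j j ≠ 0) (i : Fin d) :
    b j i * z j ≤ b j i / b j j * x j :=
  calc b j i * z j = b j i / b j j * (c j j * z j) := by
        rw [hb.1, ← mul_assoc, div_mul_cancel₀ _ hcj]
    _ ≤ b j i / b j j * x j := by gcongr; exact hx.noise_le j

lemma le_sup (hE : Acyclic E) (hb : IsMLMatrix E c b) (i : Fin d) :
    x i ≤ Finset.univ.sup fun j => b j i * z j := by
  induction i using hE.wellFounded_anc.induction with
  | _ i ih =>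
  rw [hx i]
  refine sup_le (Finset.sup_le fun k _ => ?_) ?_
  · split_ifs with hki
    · calc c k i * x k ≤ c k i * Finset.univ.sup fun j => b j k * z j := by
            gcongr; exact ih k (anc_of_edge hki)
        _ = Finset.univ.sup fun j => b j k * c k i * z j := by
            rw [NNReal.mul_finset_sup]; ring_nf
        _ ≤ Finset.univ.sup fun j => b j i * z j :=
            Finset.sup_mono_fun fun j _ => by gcongr; exact hb.mul_le_of_edge hki
    · exact zero_le
  · exact Finset.le_sup_of_le (Finset.mem_univ i) (by rw [hb.1])

lemma eq_sup (hE : Acyclic E) (hb : IsMLMatrix E c b) (i : Fin d) :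
    x i = Finset.univ.sup fun j => b j i * z j :=
  (hx.le_sup hE hb i).antisymm (Finset.sup_le fun j _ => hx.mul_le hb j i)

end IsRecML

variable {z x : Fin d → ℝ≥0}

lemma div_mul_le_sup_anLow (hE : Acyclic E) (hcd : ∀ i, 0 < c i i) (hb : IsMLMatrix E c b)
    (hx : IsRecML E c z x) (U : Set (Fin d)) (i : Fin d) {k : Fin d} (hk : k ∈ U) :
    b k i / b k k * x k ≤
      Finset.univ.sup fun k => if k ∈ AnLow E c b U i then b k i / b k k * x k else 0 := by
  induction k using hE.wellFounded_flip_anc.induction with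
  | _ k ih =>
  by_cases hlow : k ∈ AnLow E c b U i
  · exact Finset.le_sup_of_le (Finset.mem_univ k) (by rw [if_pos hlow])
  by_cases hki : b k i = 0
  · simp [hki]
  obtain ⟨p, hp, u, huU, huk, hup⟩ : ∃ p, MaxWeighted E c b k i p ∧ ∃ u ∈ U, u ≠ k ∧ u ∈ p := by
    simpa [AnLow, hb.anc_or_eq_of_ne_zero hki, hk] using hlow
  obtain ⟨s, t, -, hs, -⟩ := hp.1.isWalk.split hup
  have hku : anc E k u := hs.anc_or_eq.resolve_right (Ne.symm huk)
  calc b k i / b k k * x k ≤ b u i / b u u * b k u / b k k * x k := by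
        gcongr; exact hb.le_div_mul_of_mem hp hup (hcd u).ne'
    _ = b u i / b u u * (b k u / b k k * x k) := by rw [mul_div_assoc, mul_assoc]
    _ ≤ b u i / b u u * x u := by gcongr; exact hx.div_mul_le hb k u
    _ ≤ _ := ih u hku huU

lemma mul_le_sup_anLow (hE : Acyclic E) (hcd : ∀ i, 0 < c i i) (hb : IsMLMatrix E c b)
    (hx : IsRecML E c z x) (U : Set (Fin d)) {j i : Fin d}
    (hj : ¬ ((j = i ∨ (anc E j i ∧ ∀ p, MaxWeighted E c b j i p → ¬ ∃ u ∈ U, u ∈ p)) ∧ j ∉ U)) :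
    b j i * z j ≤
      Finset.univ.sup fun k => if k ∈ AnLow E c b U i then b k i / b k k * x k else 0 := by
  by_cases hjU : j ∈ U
  · exact (hx.mul_le_div_mul hb (hcd j).ne' i).trans (div_mul_le_sup_anLow hE hcd hb hx U i hjU)
  by_cases hji0 : b j i = 0
  · simp [hji0]
  have hji : j ≠ i := fun h => hj ⟨.inl h, hjU⟩
  have hanc : anc E j i := (hb.anc_or_eq_of_ne_zero hji0).resolve_right hji
  obtain ⟨p, hp, u, huU, hup⟩ : ∃ p, MaxWeighted E c b j i p ∧ ∃ u ∈ U, u ∈ p := by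
    simpa [hji, hanc, hjU] using hj
  calc b j i * z j ≤ b u i / b u u * b j u * z j := by
        gcongr; exact hb.le_div_mul_of_mem hp hup (hcd u).ne'
    _ = b u i / b u u * (b j u * z j) := mul_assoc _ _ _
    _ ≤ b u i / b u u * x u := by gcongr; exact hx.mul_le hb j u
    _ ≤ _ := div_mul_le_sup_anLow hE hcd hb hx U i huU

end

theorem stmt18_general {d : ℕ} (E : Fin d → Fin d → Prop) (hE : Acyclic E)
    (c : Fin d → Fin d → ℝ≥0) (hcd : ∀ i, 0 < c i i)
    (b : Fin d → Fin d → ℝ≥0) (hb : IsMLMatrix E c b)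
    (U : Set (Fin d)) (i : Fin d) (z x : Fin d → ℝ≥0) (hx : IsRecML E c z x) :
    x i =
      (Finset.univ.sup fun k =>
        if k ∈ AnLow E c b U i then (b k i / b k k) * x k else 0) ⊔
      (Finset.univ.sup fun j =>
        if (j = i ∨ (anc E j i ∧ ∀ p, MaxWeighted E c b j i p → ¬ ∃ u ∈ U, u ∈ p)) ∧ j ∉ U
        then b j i * z j else 0) := by
  refine le_antisymm ?_ (sup_le ?_ ?_)
  · rw [hx.eq_sup hE hb i]
    refine Finset.sup_le fun j _ => ?_
    by_cases hj : (j = i ∨ (anc E j i ∧ ∀ p, MaxWeighted E c b j i p → ¬ ∃ u ∈ U, u ∈ p)) ∧ j ∉ U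
    · exact le_sup_of_le_right (Finset.le_sup_of_le (Finset.mem_univ j) (by rw [if_pos hj]))
    · exact le_sup_of_le_left (mul_le_sup_anLow hE hcd hb hx U hj)
  · refine Finset.sup_le fun k _ => ?_
    split_ifs
    exacts [hx.div_mul_le hb k i, zero_le]
  · refine Finset.sup_le fun j _ => ?_
    split_ifs
    exacts [hx.mul_le hb j i, zero_le]

/-- Let `U ⊆ V` and `i ∈ V`. For every `z` with recursive max-linear values
`x` on `𝒟`, one has
`x i = max (max_{k ∈ An_low^U(i)} (b k i / b k k) * x k) (max_{j ∈ An_nmw^U(i)} b j i * z j)`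
where `An_nmw^U(i) = (an_nmw^U(i) ∪ {i}) ∩ Uᶜ` and `an_nmw^U(i)` is the set of `j ∈ an(i)`
such that no max-weighted path from `j` to `i` passes through a node of `U`
(empty maxima being `0`). -/
theorem stmt18 {d : ℕ} (hd : 1 ≤ d) (E : Fin d → Fin d → Prop) (hE : Acyclic E)
    (c : Fin d → Fin d → ℝ≥0) (hcd : ∀ i, 0 < c i i) (hce : ∀ k i, E k i → 0 < c k i)
    (b : Fin d → Fin d → ℝ≥0) (hb : IsMLMatrix E c b)
    (U : Set (Fin d)) (i : Fin d) (z x : Fin d → ℝ≥0) (hx : IsRecML E c z x) :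
    x i =
      (Finset.univ.sup fun k =>
        if k ∈ AnLow E c b U i then (b k i / b k k) * x k else 0) ⊔
      (Finset.univ.sup fun j =>
        if (j = i ∨ (anc E j i ∧ ∀ p, MaxWeighted E c b j i p → ¬ ∃ u ∈ U, u ∈ p)) ∧ j ∉ U
        then b j i * z j else 0) :=
  stmt18_general E hE c hcd b hb U i z x hx
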